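/- arXiv:2005.13405 — 4 statements merged into one kernel-verified Lean document; each statement's English description precedes it below -/
import Mathlib

section
/- Let (X,d) be a rectifiably connected metric space with intrinsic metric d̃ satisfying d̃(x,y) → 0 whenever d(x,y) → 0. If (X,d) is complete, then (X, d̃) is complete. -/
open Filter Topology Set

noncomputable def intrinsicEDist {X : Type*} [MetricSpace X] (x y : X) : ENNReal :=
  ⨅ (ξ : ℝ → X) (_ : ContinuousOn ξ (Set.Icc 0 1)) (_ : ξ 0 = x) (_ : ξ 1 = y),
    eVariationOn ξ (Set.Icc 0 1)

noncomputable def intrinsicDist {X : Type*} [MetricSpace X] (x y : X) : ℝ :=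
  (intrinsicEDist x y).toReal

lemma edist_le_intrinsicEDist {X : Type*} [MetricSpace X] (x y : X) :
    edist x y ≤ intrinsicEDist x y := by
  refine le_iInf fun ξ => le_iInf fun hξ => le_iInf fun h0 => le_iInf fun h1 => ?_
  have := eVariationOn.edist_le ξ (x := (0:ℝ)) (y := (1:ℝ)) (s := Set.Icc 0 1)
    (by constructor <;> norm_num) (by constructor <;> norm_num)
  rw [h0, h1] at this
  exact this

lemma dist_le_intrinsicDist {X : Type*} [MetricSpace X]
    (hrect : ∀ x y : X, intrinsicEDist x y < ⊤) (x y : X) :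
    dist x y ≤ intrinsicDist x y := by
  rw [dist_edist, intrinsicDist]
  exact ENNReal.toReal_mono (hrect x y).ne (edist_le_intrinsicEDist x y)

/-- if `(X,d)` is complete, rectifiably connected, and the intrinsic
metric `d̃` satisfies the consistency condition (`d̃ → 0` as `d → 0`), then
`(X, d̃)` is complete: every `d̃`-Cauchy sequence converges with respect to `d̃`. -/
theorem intrinsic_complete {X : Type*} [MetricSpace X] [CompleteSpace X]
    (hrect : ∀ x y : X, intrinsicEDist x y < ⊤)
    (hcons : ∀ ε > (0 : ℝ), ∃ δ > (0 : ℝ), ∀ x y : X,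
      dist x y < δ → intrinsicDist x y < ε) :
    ∀ s : ℕ → X,
      (∀ ε > (0 : ℝ), ∃ N : ℕ, ∀ m ≥ N, ∀ n ≥ N, intrinsicDist (s m) (s n) < ε) →
      ∃ x : X, ∀ ε > (0 : ℝ), ∃ N : ℕ, ∀ n ≥ N, intrinsicDist (s n) x < ε := by
  intro s hs
  have hcauchy : CauchySeq s := by
    rw [Metric.cauchySeq_iff]
    intro ε hε
    obtain ⟨N, hN⟩ := hs ε hε
    exact ⟨N, fun m hm n hn =>
      lt_of_le_of_lt (dist_le_intrinsicDist hrect (s m) (s n)) (hN m hm n hn)⟩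
  obtain ⟨x, hx⟩ := cauchySeq_tendsto_of_complete hcauchy
  refine ⟨x, fun ε hε => ?_⟩
  obtain ⟨δ, hδ, hδ'⟩ := hcons ε hε
  obtain ⟨N, hN⟩ := (Metric.tendsto_atTop.1 hx) δ hδ
  exact ⟨N, fun n hn => hδ' _ _ (hN n hn)⟩
end

section
/- Let Ω be an open subset of a length space (X,d), f: Ω → ℝ continuous with f ≥ 0, and u: Ω → ℝ satisfy u(ξ(t₁)) ≤ ∫_{t₁}^{t₂} f(ξ(r)) dr + u(ξ(t₂)) for every 1-Lipschitz (unit-speed) curve ξ: ℝ → Ω and t₁ < t₂. Then for every x₀ ∈ Ω and r > 0 with the closed ball B_{2r}(x₀) ⊂ Ω and f bounded on B_{2r}(x₀), u satisfies |u(x) − u(y)| ≤ d(x,y) · sup_{B_{2r}(x₀)} f for all x, y ∈ B_r(x₀). In particular u is locally Lipschitz in Ω. -/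
open Filter Topology Set

/-- The clamp map `t ↦ max 0 (min T t)` is 1-Lipschitz. -/
lemma clamp_lipschitz (T : ℝ) : LipschitzWith 1 (fun t : ℝ => max 0 (min T t)) := by
  rw [lipschitzWith_iff_dist_le_mul]
  intro s t
  simp only [Real.dist_eq, NNReal.coe_one, one_mul]
  calc |max 0 (min T s) - max 0 (min T t)|
      = |max (min T s) 0 - max (min T t) 0| := by rw [max_comm 0, max_comm 0]
    _ ≤ |min T s - min T t| := abs_max_sub_max_le_abs _ _ _
    _ ≤ max |T - T| |s - t| := abs_min_sub_min_le_max _ _ _ _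
    _ ≤ |s - t| := by simp

/-- One-sided key estimate. -/
lemma one_side_estimate {X : Type*} [MetricSpace X]
    (hlen : ∀ x y : X, ∀ ε > (0 : ℝ), ∃ ξ : ℝ → X, LipschitzWith 1 ξ ∧ ξ 0 = x ∧
      ∃ T : ℝ, 0 ≤ T ∧ T ≤ dist x y + ε ∧ ξ T = y)
    (Ω : Set X) (f u : X → ℝ)
    (hf : ContinuousOn f Ω) (hf0 : ∀ x ∈ Ω, 0 ≤ f x)
    (hsub : ∀ ξ : ℝ → X, LipschitzWith 1 ξ → (∀ t : ℝ, ξ t ∈ Ω) →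
      ∀ t₁ t₂ : ℝ, t₁ < t₂ → u (ξ t₁) ≤ (∫ r in t₁..t₂, f (ξ r)) + u (ξ t₂))
    (x₀ : X) (r : ℝ) (hr : 0 < r) (hball : Metric.closedBall x₀ (2 * r) ⊆ Ω)
    (M : ℝ) (hM : ∀ z ∈ Metric.closedBall x₀ (2 * r), f z ≤ M)
    (x : X) (hx : x ∈ Metric.ball x₀ r) (y : X) (hy : y ∈ Metric.ball x₀ r) :
    u x - u y ≤ dist x y * M := by
  rw [Metric.mem_ball] at hx hy
  have hx₀mem : x₀ ∈ Metric.closedBall x₀ (2 * r) := Metric.mem_closedBall_self (by linarith)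
  have hM0 : 0 ≤ M := le_trans (hf0 x₀ (hball hx₀mem)) (hM x₀ hx₀mem)
  have hdxy : dist x y < 2 * r := by
    calc dist x y ≤ dist x x₀ + dist x₀ y := dist_triangle _ _ _
      _ < 2 * r := by rw [dist_comm x₀ y]; linarith
  -- main claim for small ε
  have claim : ∀ ε : ℝ, 0 < ε → ε ≤ 2 * r - dist x y →
      u x - u y ≤ (dist x y + ε) * M := by
    intro ε hε hε2
    obtain ⟨ξ, hξ, hξ0, T, hT0, hTle, hξT⟩ := hlen x y ε hε
    set g : ℝ → ℝ := fun t => max 0 (min T t) with hg_def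
    have hg : LipschitzWith 1 g := clamp_lipschitz T
    set ξ' : ℝ → X := ξ ∘ g with hξ'_def
    have hξ' : LipschitzWith 1 ξ' := by simpa using hξ.comp hg
    have hmem : ∀ t : ℝ, ξ' t ∈ Metric.closedBall x₀ (2 * r) := by
      intro t
      set s : ℝ := g t with hs_def
      have hs0 : 0 ≤ s := le_max_left _ _
      have hsT : s ≤ T := max_le hT0 (min_le_left _ _)
      have h1 : dist (ξ s) x ≤ s := by
        rw [← hξ0]
        calc dist (ξ s) (ξ 0) ≤ 1 * dist s 0 := hξ.dist_le_mul s 0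
          _ = s := by simp [Real.dist_eq, abs_of_nonneg hs0]
      have h2 : dist (ξ s) y ≤ T - s := by
        rw [← hξT]
        calc dist (ξ s) (ξ T) ≤ 1 * dist s T := hξ.dist_le_mul s T
          _ = T - s := by rw [Real.dist_eq, abs_of_nonpos (by linarith)]; ring
      have hb1 : dist (ξ s) x₀ ≤ s + dist x x₀ :=
        le_trans (dist_triangle _ x _) (by linarith)
      have hb2 : dist (ξ s) x₀ ≤ (T - s) + dist y x₀ :=
        le_trans (dist_triangle _ y _) (by linarith)
      have hxx₀ : dist x x₀ < r := hx
      have hyx₀ : dist y x₀ < r := hy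
      rw [Metric.mem_closedBall]
      show dist (ξ s) x₀ ≤ 2 * r
      linarith
    -- endpoints
    have he0 : ξ' 0 = x := by
      have : g 0 = 0 := by simp [hg_def, min_eq_right hT0]
      simp [hξ'_def, this, hξ0]
    have heT : ξ' T = y := by
      have : g T = T := by simp [hg_def, max_eq_right hT0]
      simp [hξ'_def, this, hξT]
    have hdxyT : dist x y ≤ T := by
      rw [← hξ0, ← hξT]
      calc dist (ξ 0) (ξ T) ≤ 1 * dist (0 : ℝ) T := hξ.dist_le_mul 0 T
        _ = T := by simp [Real.dist_eq, abs_of_nonneg hT0]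
    rcases hT0.eq_or_lt with hT | hTpos
    · -- T = 0, so x = y
      have hxy : x = y := by
        have : dist x y ≤ 0 := by rw [hT]; exact hdxyT
        exact dist_le_zero.mp this
      rw [hxy]
      have : 0 ≤ (dist y y + ε) * M := by positivity
      linarith
    · have hkey := hsub ξ' hξ' (fun t => hball (hmem t)) 0 T hTpos
      rw [he0, heT] at hkey
      have hcont : Continuous (fun t => f (ξ' t)) :=
        hf.comp_continuous hξ'.continuous (fun t => hball (hmem t))
      have hintle : (∫ t in (0:ℝ)..T, f (ξ' t)) ≤ ∫ _t in (0:ℝ)..T, M := by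
        apply intervalIntegral.integral_mono_on hT0
          (hcont.intervalIntegrable 0 T) intervalIntegrable_const
        intro t _
        exact hM _ (hmem t)
      rw [intervalIntegral.integral_const, smul_eq_mul, sub_zero] at hintle
      have hTM : T * M ≤ (dist x y + ε) * M := mul_le_mul_of_nonneg_right hTle hM0
      linarith
  -- pass to the limit
  have hfinal : ∀ ε : ℝ, 0 < ε → u x - u y ≤ dist x y * M + ε := by
    intro ε hε
    rcases hM0.eq_or_lt with hM0' | hMpos
    · have := claim (2 * r - dist x y) (by linarith) le_rfl
      rw [← hM0'] at this ⊢
      linarith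
    · have hε' : 0 < min (ε / M) (2 * r - dist x y) := by
        apply lt_min (by positivity) (by linarith)
      have h := claim _ hε' (min_le_right _ _)
      have h2 : min (ε / M) (2 * r - dist x y) * M ≤ (ε / M) * M :=
        mul_le_mul_of_nonneg_right (min_le_left _ _) hM0
      rw [div_mul_cancel₀ _ (ne_of_gt hMpos)] at h2
      nlinarith
  exact le_of_forall_pos_le_add hfinal

/-- in a length space, a function satisfying the curve-based
(integral) subsolution property of the eikonal equation `|∇u| = f` satisfies
the local Lipschitz estimate `|u(x) − u(y)| ≤ d(x,y) · sup_{B_{2r}(x₀)} f`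
on balls, and in particular is locally Lipschitz in `Ω`. -/
theorem c_subsolution_locally_Lipschitz {X : Type*} [MetricSpace X]
    (hlen : ∀ x y : X, ∀ ε > (0 : ℝ), ∃ ξ : ℝ → X, LipschitzWith 1 ξ ∧ ξ 0 = x ∧
      ∃ T : ℝ, 0 ≤ T ∧ T ≤ dist x y + ε ∧ ξ T = y)
    (Ω : Set X) (hΩ : IsOpen Ω) (f u : X → ℝ)
    (hf : ContinuousOn f Ω) (hf0 : ∀ x ∈ Ω, 0 ≤ f x)
    (hsub : ∀ ξ : ℝ → X, LipschitzWith 1 ξ → (∀ t : ℝ, ξ t ∈ Ω) →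
      ∀ t₁ t₂ : ℝ, t₁ < t₂ → u (ξ t₁) ≤ (∫ r in t₁..t₂, f (ξ r)) + u (ξ t₂)) :
    (∀ x₀ ∈ Ω, ∀ r > (0 : ℝ), Metric.closedBall x₀ (2 * r) ⊆ Ω →
      ∀ M : ℝ, (∀ z ∈ Metric.closedBall x₀ (2 * r), f z ≤ M) →
      ∀ x ∈ Metric.ball x₀ r, ∀ y ∈ Metric.ball x₀ r,
        |u x - u y| ≤ dist x y * M) ∧
    (∀ x ∈ Ω, ∃ ε > (0 : ℝ), ∃ K : NNReal,
      LipschitzOnWith K u (Metric.ball x ε ∩ Ω)) := by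
  have main : ∀ x₀ ∈ Ω, ∀ r > (0 : ℝ), Metric.closedBall x₀ (2 * r) ⊆ Ω →
      ∀ M : ℝ, (∀ z ∈ Metric.closedBall x₀ (2 * r), f z ≤ M) →
      ∀ x ∈ Metric.ball x₀ r, ∀ y ∈ Metric.ball x₀ r,
        |u x - u y| ≤ dist x y * M := by
    intro x₀ _ r hr hball M hM x hx y hy
    rw [abs_sub_le_iff]
    constructor
    · exact one_side_estimate hlen Ω f u hf hf0 hsub x₀ r hr hball M hM x hx y hy
    · rw [dist_comm]
      exact one_side_estimate hlen Ω f u hf hf0 hsub x₀ r hr hball M hM y hy x hx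
  refine ⟨main, ?_⟩
  intro x hx
  obtain ⟨R, hR, hRΩ⟩ := Metric.isOpen_iff.1 hΩ x hx
  have hcx : ContinuousAt f x := hf.continuousAt (hΩ.mem_nhds hx)
  have h1 : ∀ᶠ z in 𝓝 x, f z < f x + 1 :=
    hcx.eventually_lt continuousAt_const (by linarith)
  obtain ⟨δ, hδ, hδf⟩ := Metric.eventually_nhds_iff.1 h1
  set r : ℝ := min R δ / 4 with hr_def
  have hr : 0 < r := by positivity
  have hball : Metric.closedBall x (2 * r) ⊆ Ω := by
    intro z hz
    apply hRΩ
    rw [Metric.mem_closedBall] at hz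
    rw [Metric.mem_ball]
    have : min R δ ≤ R := min_le_left _ _
    calc dist z x ≤ 2 * r := hz
      _ < R := by rw [hr_def]; linarith
  have hM : ∀ z ∈ Metric.closedBall x (2 * r), f z ≤ f x + 1 := by
    intro z hz
    rw [Metric.mem_closedBall] at hz
    have : min R δ ≤ δ := min_le_right _ _
    have hzδ : dist z x < δ := by
      calc dist z x ≤ 2 * r := hz
        _ < δ := by rw [hr_def]; linarith
    exact le_of_lt (hδf hzδ)
  have hfx0 : 0 ≤ f x := hf0 x hx
  refine ⟨r, hr, Real.toNNReal (f x + 1), ?_⟩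
  rw [lipschitzOnWith_iff_dist_le_mul]
  intro a ha b hb
  have ha' : a ∈ Metric.ball x r := ha.1
  have hb' : b ∈ Metric.ball x r := hb.1
  have := main x hx r hr hball (f x + 1) hM a ha' b hb'
  rw [Real.dist_eq]
  rw [Real.coe_toNNReal _ (by linarith)]
  calc |u a - u b| ≤ dist a b * (f x + 1) := this
    _ = (f x + 1) * dist a b := mul_comm _ _
end

section
/- Comparison principle for Monge solutions of the eikonal equation: let (X,d) be a complete length space, Ω ⊊ X a bounded open set, f: Ω → ℝ bounded with inf_Ω f > 0. Let u, v ∈ C(cl Ω) be bounded, locally Lipschitz on Ω, with |∇⁻u|(x) ≤ f(x) for all x ∈ Ω (Monge subsolution) and |∇⁻v|(x) ≥ f(x) for all x ∈ Ω (Monge supersolution). If limsup as δ→0 of sup{u(x)−v(x) : x ∈ cl Ω, dist(x,∂Ω) ≤ δ} ≤ 0, then u ≤ v on cl Ω. -/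
open Filter Topology Set

/-- Sub-slope `|∇⁻w|(x) = limsup_{y→x} max{w(x)−w(y),0}/d(x,y)`. -/
noncomputable def subSlope {X : Type*} [MetricSpace X] (w : X → ℝ) (x : X) : ℝ :=
  Filter.limsup (fun y => max (w x - w y) 0 / dist x y) (𝓝[≠] x)

/-!
If `u - v` were positive somewhere, Ekeland's principle applied to `v - (1 - μ) u` on `closure Ω`
would give a point `z` where this function is minimal up to a perturbation `c * dist z ·`. The
boundary condition keeps `z` inside `Ω`, and comparing difference quotients at `z` gives
`f z ≤ |∇⁻v| z ≤ (1 - μ) |∇⁻u| z + c ≤ (1 - μ) f z + c`, which fails for `c = μ m / 2`.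
-/

namespace Ekeland

variable {α : Type*} [MetricSpace α] {F : α → ℝ} {c : ℝ}

def descentSet (F : α → ℝ) (c : ℝ) (x : α) : Set α :=
  {y | F y + c * dist x y ≤ F x}

lemma mem_descentSet_self (x : α) : x ∈ descentSet F c x := by
  simp [descentSet]

lemma descentSet_subset_of_mem (hc : 0 ≤ c) {x y : α} (hy : y ∈ descentSet F c x) :
    descentSet F c y ⊆ descentSet F c x := fun w hw => by
  simp only [descentSet, mem_ofPred_eq] at hy hw ⊢
  nlinarith [dist_triangle x y w]

lemma isClosed_descentSet (hF : LowerSemicontinuous F) (x : α) :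
    IsClosed (descentSet F c x) :=
  (hF.add (continuous_const.mul (continuous_const.dist continuous_id)).lowerSemicontinuous)
    |>.isClosed_preimage (F x)

lemma exists_mem_descentSet_forall_le_add (hF : BddBelow (range F)) (x : α) {ε : ℝ}
    (hε : 0 < ε) : ∃ y ∈ descentSet F c x, ∀ w ∈ descentSet F c x, F y ≤ F w + ε := by
  have hne : (F '' descentSet F c x).Nonempty := ⟨F x, x, mem_descentSet_self x, rfl⟩
  obtain ⟨_, ⟨y, hy, rfl⟩, hlt⟩ := Real.lt_sInf_add_pos hne hε
  exact ⟨y, hy, fun w hw =>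
    by linarith [csInf_le (hF.mono (image_subset_range _ _)) (mem_image_of_mem F hw)]⟩

lemma descentSet_subset_closedBall (hc : 0 < c) {x y : α} {ε : ℝ} (hy : y ∈ descentSet F c x)
    (hmin : ∀ w ∈ descentSet F c x, F y ≤ F w + ε) :
    descentSet F c y ⊆ Metric.closedBall y (ε / c) := fun w hw => by
  have hwx := hmin w (descentSet_subset_of_mem hc.le hy hw)
  simp only [descentSet, mem_ofPred_eq] at hw
  rw [Metric.mem_closedBall, dist_comm, le_div_iff₀ hc]
  linarith

end Ekeland

open Ekeland in
/-- Ekeland's variational principle: successive near-minimisers of `F` over descent sets give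
nested closed descent sets of radii tending to `0`, which shrink to the point `z`. -/
theorem LowerSemicontinuous.exists_le_forall_le_add_mul_dist {α : Type*} [MetricSpace α]
    [CompleteSpace α] {F : α → ℝ} {c : ℝ} (hF : LowerSemicontinuous F) (hB : BddBelow (range F))
    (hc : 0 < c) (x₀ : α) : ∃ z, F z ≤ F x₀ ∧ ∀ y, F z ≤ F y + c * dist z y := by
  choose g hg hgmin using fun x (n : ℕ) =>
    exists_mem_descentSet_forall_le_add (c := c) hB x (Nat.one_div_pos_of_nat (n := n))
  let x : ℕ → α := fun n => Nat.rec x₀ (fun n xn => g xn n) n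
  have hanti : Antitone fun n => descentSet F c (x n) :=
    antitone_nat_of_succ_le fun n => descentSet_subset_of_mem hc.le (hg _ n)
  set r : ℕ → ℝ := fun n => 1 / ((n : ℝ) + 1) / c with hr_def
  have hball : ∀ n, descentSet F c (x (n + 1)) ⊆ Metric.closedBall (x (n + 1)) (r n) :=
    fun n => descentSet_subset_closedBall hc (hg _ n) (hgmin _ n)
  have hr : Tendsto r atTop (𝓝 0) := by
    simpa [hr_def] using tendsto_one_div_add_atTop_nhds_zero_nat.div_const c
  have hcauchy : CauchySeq fun n => x (n + 1) :=
    cauchySeq_of_le_tendsto_0' r (fun n k hnk => by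
      rw [dist_comm]
      exact hball n (hanti (Nat.succ_le_succ hnk) (mem_descentSet_self _))) hr
  obtain ⟨z, hz⟩ := cauchySeq_tendsto_of_complete hcauchy
  have hzmem : ∀ n, z ∈ descentSet F c (x n) := fun n =>
    (isClosed_descentSet hF _).mem_of_tendsto hz <| eventually_atTop.2
      ⟨n, fun k hk => hanti (Nat.le_succ_of_le hk) (mem_descentSet_self _)⟩
  refine ⟨z, ?_, fun y => ?_⟩
  · have hz0 : F z + c * dist x₀ z ≤ F x₀ := hzmem 0
    nlinarith [dist_nonneg (x := x₀) (y := z)]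
  by_contra! hy
  have hyz : dist y z ≤ 0 := by
    refine ge_of_tendsto (by simpa using hr.const_mul 2) (Eventually.of_forall fun n => ?_)
    have hy' : y ∈ descentSet F c (x (n + 1)) :=
      descentSet_subset_of_mem hc.le (hzmem (n + 1)) hy.le
    linarith [dist_triangle_right y z (x (n + 1)), Metric.mem_closedBall.1 (hball n hy'),
      Metric.mem_closedBall.1 (hball n (hzmem (n + 1)))]
  rw [dist_le_zero.1 hyz, dist_self] at hy
  linarith

theorem ContinuousOn.exists_le_forall_le_add_mul_dist {α : Type*} [MetricSpace α]
    [CompleteSpace α] {F : α → ℝ} {s : Set α} {c : ℝ} (hF : ContinuousOn F s) (hs : IsClosed s)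
    (hB : BddBelow (F '' s)) (hc : 0 < c) {x₀ : α} (hx₀ : x₀ ∈ s) :
    ∃ z ∈ s, F z ≤ F x₀ ∧ ∀ y ∈ s, F z ≤ F y + c * dist z y := by
  have : CompleteSpace s := hs.completeSpace_coe
  obtain ⟨⟨z, hz⟩, hFz, hmin⟩ := hF.domRestrict.lowerSemicontinuous.exists_le_forall_le_add_mul_dist
    (by rwa [range_domRestrict]) hc ⟨x₀, hx₀⟩
  exact ⟨z, hz, hFz, fun y hy => hmin ⟨y, hy⟩⟩

lemma exists_pos_lt_one_forall_abs_mul_le {ι : Type*} {s : Set ι} {g : ι → ℝ} {C η : ℝ}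
    (hg : ∀ x ∈ s, |g x| ≤ C) (hη : 0 < η) :
    ∃ μ : ℝ, 0 < μ ∧ μ < 1 ∧ ∀ x ∈ s, |μ * g x| ≤ η := by
  set μ := min (1 / 2 : ℝ) (η / (|C| + 1))
  have hμ0 : 0 < μ := by positivity
  have hμC : μ * (|C| + 1) ≤ η :=
    calc μ * (|C| + 1) ≤ η / (|C| + 1) * (|C| + 1) := by gcongr; exact min_le_right _ _
      _ = η := by field_simp
  refine ⟨μ, hμ0, (min_le_left _ _).trans_lt (by norm_num), fun x hx => ?_⟩
  rw [abs_mul, abs_of_pos hμ0]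
  nlinarith [hg x hx, le_abs_self C]

section SubSlope

variable {X : Type*} [MetricSpace X] {u w : X → ℝ} {x : X}

lemma neBot_nhdsNE_of_subSlope_pos (h : 0 < subSlope w x) : (𝓝[≠] x).NeBot := by
  by_contra hbot
  rw [not_neBot] at hbot
  -- over `⊥` every bound holds eventually, so the limsup is the junk value `sInf univ = 0`
  rw [subSlope, hbot, limsup_eq] at h
  simp only [eventually_bot, ofPred_true, Real.sInf_of_not_bddBelow not_bddBelow_univ] at h
  exact h.false

lemma LipschitzOnWith.isBoundedUnder_subSlope {K : NNReal} {s : Set X}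
    (hs : s ∈ 𝓝 x) (hu : LipschitzOnWith K u s) :
    IsBoundedUnder (· ≤ ·) (𝓝[≠] x) fun y => max (u x - u y) 0 / dist x y := by
  refine isBoundedUnder_of_eventually_le (a := (K : ℝ)) ?_
  filter_upwards [nhdsWithin_le_nhds hs, self_mem_nhdsWithin] with y hy hyx
  rw [div_le_iff₀ (dist_pos.2 (Ne.symm hyx))]
  refine max_le ((le_abs_self _).trans ?_) (by positivity)
  simpa [Real.dist_eq] using hu.dist_le_mul x (mem_of_mem_nhds hs) y hy

lemma subSlope_le_mul_add [(𝓝[≠] x).NeBot] {l c : ℝ} (hl : 0 ≤ l) (hc : 0 ≤ c)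
    (hu : IsBoundedUnder (· ≤ ·) (𝓝[≠] x) fun y => max (u x - u y) 0 / dist x y)
    (hwu : ∀ᶠ y in 𝓝[≠] x, w x - w y ≤ l * (u x - u y) + c * dist x y) :
    subSlope w x ≤ l * subSlope u x + c := by
  have hq : ∀ᶠ y in 𝓝[≠] x,
      max (w x - w y) 0 / dist x y ≤ l * (max (u x - u y) 0 / dist x y) + c := by
    filter_upwards [hwu, self_mem_nhdsWithin] with y hy hyx
    have hd : 0 < dist x y := dist_pos.2 (Ne.symm hyx)
    rw [mul_div_assoc', div_add' _ _ _ hd.ne', div_le_div_iff_of_pos_right hd]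
    exact max_le (hy.trans (by gcongr; exact le_max_left _ _)) (by positivity)
  have hmono : Monotone fun a : ℝ => l * a + c := fun _ _ hab => by dsimp only; gcongr
  have hcobdd {g : X → ℝ} : IsCoboundedUnder (· ≤ ·) (𝓝[≠] x)
      fun y => max (g x - g y) 0 / dist x y :=
    isCoboundedUnder_le_of_le _ fun y => by positivity
  exact (limsup_le_limsup hq hcobdd (hu.comp fun _ _ h => hmono h)).trans_eq
    (hmono.map_limsup_of_continuousAt _ (by fun_prop) hu hcobdd).symm

end SubSlope

theorem monge_comparison_general {X : Type*} [MetricSpace X] [CompleteSpace X]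
    (Ω : Set X) (hΩ : IsOpen Ω)
    (f : X → ℝ)
    (m : ℝ) (hm : 0 < m) (hinf : ∀ x ∈ Ω, m ≤ f x)
    (u v : X → ℝ)
    (hu : ContinuousOn u (closure Ω)) (hv : ContinuousOn v (closure Ω))
    (hubdd : ∃ C : ℝ, ∀ x ∈ closure Ω, |u x| ≤ C)
    (hvbdd : ∃ C : ℝ, ∀ x ∈ closure Ω, |v x| ≤ C)
    (huLip : ∀ x ∈ Ω, ∃ ε > (0 : ℝ), ∃ K : NNReal,
      LipschitzOnWith K u (Metric.ball x ε ∩ Ω))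
    (hsub : ∀ x ∈ Ω, subSlope u x ≤ f x)
    (hsup : ∀ x ∈ Ω, f x ≤ subSlope v x)
    (hbdry : ∀ ε > (0 : ℝ), ∃ δ > (0 : ℝ), ∀ x ∈ closure Ω,
      Metric.infDist x (frontier Ω) ≤ δ → u x - v x ≤ ε) :
    ∀ x ∈ closure Ω, u x ≤ v x := by
  intro x₀ hx₀
  by_contra! hlt
  set θ := u x₀ - v x₀
  obtain ⟨C, hC⟩ := hubdd
  obtain ⟨Cv, hCv⟩ := hvbdd
  obtain ⟨μ, hμ0, hμ1, hμu⟩ := exists_pos_lt_one_forall_abs_mul_le hC (by positivity : 0 < θ / 4)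
  have hbdd : BddBelow ((fun x => v x - (1 - μ) * u x) '' closure Ω) := by
    refine ⟨-Cv - C, ?_⟩
    rintro _ ⟨x, hx, rfl⟩
    nlinarith [abs_le.1 (hC x hx), abs_le.1 (hCv x hx)]
  have hcont : ContinuousOn (fun x => v x - (1 - μ) * u x) (closure Ω) :=
    hv.sub (continuousOn_const.mul hu)
  obtain ⟨z, hzc, hFz, hmin⟩ := hcont.exists_le_forall_le_add_mul_dist isClosed_closure hbdd
    (c := μ * m / 2) (by positivity) hx₀
  have hgap : θ / 4 < u z - v z := by
    linarith [abs_le.1 (hμu z hzc), abs_le.1 (hμu x₀ hx₀)]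
  have hzΩ : z ∈ Ω := by
    obtain ⟨δ, hδ, hδbdry⟩ := hbdry (θ / 4) (by positivity)
    rw [← hΩ.interior_eq, ← closure_sdiff_frontier]
    refine ⟨hzc, fun hzfr => hgap.not_ge (hδbdry z hzc ?_)⟩
    exact (Metric.infDist_zero_of_mem hzfr).trans_le hδ.le
  obtain ⟨ε, hε, K, hK⟩ := huLip z hzΩ
  have := neBot_nhdsNE_of_subSlope_pos (hm.trans_le ((hinf z hzΩ).trans (hsup z hzΩ)))
  have hslope : subSlope v z ≤ (1 - μ) * subSlope u z + μ * m / 2 := by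
    refine subSlope_le_mul_add (by linarith) (by positivity)
      (hK.isBoundedUnder_subSlope
        (inter_mem (Metric.ball_mem_nhds z hε) (hΩ.mem_nhds hzΩ))) ?_
    filter_upwards [nhdsWithin_le_nhds (hΩ.mem_nhds hzΩ)] with y hy
    linarith [hmin y (subset_closure hy)]
  nlinarith [hsub z hzΩ, hsup z hzΩ, hinf z hzΩ]

/-- comparison principle for Monge solutions of the eikonal
equation `|∇⁻u| = f` in a complete length space. -/
theorem monge_comparison {X : Type*} [MetricSpace X] [CompleteSpace X]
    (hlen : ∀ x y : X, ∀ ε > (0 : ℝ), ∃ ξ : ℝ → X, LipschitzWith 1 ξ ∧ ξ 0 = x ∧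
      ∃ T : ℝ, 0 ≤ T ∧ T ≤ dist x y + ε ∧ ξ T = y)
    (Ω : Set X) (hΩ : IsOpen Ω) (hΩne : Ω ≠ Set.univ)
    (hΩbdd : Bornology.IsBounded Ω)
    (f : X → ℝ) (Cf : ℝ) (hfbdd : ∀ x ∈ Ω, f x ≤ Cf)
    (m : ℝ) (hm : 0 < m) (hinf : ∀ x ∈ Ω, m ≤ f x)
    (u v : X → ℝ)
    (hu : ContinuousOn u (closure Ω)) (hv : ContinuousOn v (closure Ω))
    (hubdd : ∃ C : ℝ, ∀ x ∈ closure Ω, |u x| ≤ C)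
    (hvbdd : ∃ C : ℝ, ∀ x ∈ closure Ω, |v x| ≤ C)
    (huLip : ∀ x ∈ Ω, ∃ ε > (0 : ℝ), ∃ K : NNReal,
      LipschitzOnWith K u (Metric.ball x ε ∩ Ω))
    (hvLip : ∀ x ∈ Ω, ∃ ε > (0 : ℝ), ∃ K : NNReal,
      LipschitzOnWith K v (Metric.ball x ε ∩ Ω))
    (hsub : ∀ x ∈ Ω, subSlope u x ≤ f x)
    (hsup : ∀ x ∈ Ω, f x ≤ subSlope v x)
    (hbdry : ∀ ε > (0 : ℝ), ∃ δ > (0 : ℝ), ∀ x ∈ closure Ω,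
      Metric.infDist x (frontier Ω) ≤ δ → u x - v x ≤ ε) :
    ∀ x ∈ closure Ω, u x ≤ v x :=
  monge_comparison_general Ω hΩ f m hm hinf u v hu hv hubdd hvbdd huLip hsub hsup hbdry
end

section
/- Boundary consistency estimate: let (X,d) be a complete rectifiably connected metric space with intrinsic metric d̃ satisfying the consistency condition, Ω ⊊ X open, f: cl Ω → ℝ continuous, bounded, f ≥ 0, and ζ: ∂Ω → ℝ L-Lipschitz with respect to d̃. Define u(x) = inf over admissible curves ξ with ξ(0)=x of ∫₀^{T⁺} f(ξ(s)) ds + ζ(ξ(T⁺)), where T⁺ is the exit time of ξ from Ω. Then u(x) − ζ(y) ≤ d̃(x,y) · max{L, sup_{cl Ω} f} for all x ∈ Ω and y ∈ ∂Ω. -/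
open Filter Topology Set

/-- The exit time `T⁺_Ω[ξ] = inf{t ≥ 0 : ξ(t) ∉ Ω}`. -/
noncomputable def exitTime {X : Type*} [MetricSpace X] (Ω : Set X) (ξ : ℝ → X) : ℝ :=
  sInf {t : ℝ | 0 ≤ t ∧ ξ t ∉ Ω}

/-- The set of control values `∫₀^{T⁺} f(ξ(s)) ds + ζ(ξ(T⁺))` over admissible
(1-Lipschitz) curves starting at `x` that exit `Ω`. -/
noncomputable def controlSet {X : Type*} [MetricSpace X] (Ω : Set X)
    (f ζ : X → ℝ) (x : X) : Set ℝ :=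
  (fun ξ : ℝ → X =>
      (∫ s in (0 : ℝ)..(exitTime Ω ξ), f (ξ s)) + ζ (ξ (exitTime Ω ξ))) ''
    {ξ : ℝ → X | LipschitzWith 1 ξ ∧ ξ 0 = x ∧ ∃ t : ℝ, 0 ≤ t ∧ ξ t ∉ Ω}

/-- The value function of the optimal control problem. -/
noncomputable def uControl {X : Type*} [MetricSpace X] (Ω : Set X)
    (f ζ : X → ℝ) (x : X) : ℝ :=
  sInf (controlSet Ω f ζ x)

/-!
Given `ε > 0`, take a continuous curve from `x` to `y` whose variation is below `d̃(x,y) + ε`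
and reparametrize it by arc length. Extended by constants outside `[0, ℓ]`, it is an admissible
curve `ξ` reaching `y` at time `ℓ < d̃(x,y) + ε`. It leaves `Ω` at a time `T ≤ ℓ` through the
boundary point `ξ(T)`, and its piece between `T` and `ℓ` gives `d̃(ξ(T), y) ≤ ℓ - T`. Hence
`u(x) ≤ ∫₀ᵀ f(ξ) + ζ(ξ(T)) ≤ C T + ζ(y) + L (ℓ - T) ≤ ζ(y) + max L C · ℓ`.
-/

section Variation

variable {α E : Type*} [LinearOrder α] [TopologicalSpace α] [OrderTopology α]
  [PseudoMetricSpace E] {f : α → E} {s : Set α} {a b : α}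

theorem LocallyBoundedVariationOn.continuousWithinAt_variationOnFromTo
    (hf : LocallyBoundedVariationOn f s) (ha : a ∈ s) (hb : b ∈ s)
    (hfb : ContinuousWithinAt f s b) :
    ContinuousWithinAt (variationOnFromTo f s a) s b := by
  have hleft : ContinuousWithinAt (variationOnFromTo f s a) (s ∩ Iio b) b := by
    simpa [ContinuousWithinAt] using
      variationOnFromTo.tendsto_left ha hb hf (hfb.mono inter_subset_left)
  have hright : ContinuousWithinAt (variationOnFromTo f s a) (s ∩ Ioi b) b := by
    simpa [ContinuousWithinAt] using
      variationOnFromTo.tendsto_right ha hb hf (hfb.mono inter_subset_left)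
  refine ((hleft.union hright).insert).mono fun t ht => ?_
  rcases lt_trichotomy t b with h | rfl | h
  · exact .inr (.inl ⟨ht, h⟩)
  · exact .inl rfl
  · exact .inr (.inr ⟨ht, h⟩)

end Variation

section ArcLength

variable {E : Type*} [PseudoMetricSpace E]

theorem variationOnFromTo_image_Icc {f : ℝ → E} {a b : ℝ} (hab : a ≤ b)
    (hfc : ContinuousOn f (Icc a b)) (hf : BoundedVariationOn f (Icc a b)) :
    variationOnFromTo f (Icc a b) a '' Icc a b = Icc 0 (eVariationOn f (Icc a b)).toReal := by
  have ha : a ∈ Icc a b := left_mem_Icc.2 hab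
  refine Subset.antisymm ?_ ?_
  · rintro _ ⟨t, ht, rfl⟩
    refine ⟨variationOnFromTo.nonneg_of_le f _ ht.1, ?_⟩
    rw [variationOnFromTo.eq_of_le f _ ht.1]
    exact ENNReal.toReal_mono hf (eVariationOn.mono f inter_subset_left)
  · have hcont : ContinuousOn (variationOnFromTo f (Icc a b) a) (Icc a b) := fun t ht =>
      hf.locallyBoundedVariationOn.continuousWithinAt_variationOnFromTo ha ht (hfc t ht)
    simpa [variationOnFromTo.self, variationOnFromTo.eq_of_le f _ hab]
      using intermediate_value_Icc hab hcont

theorem HasUnitSpeedOn.lipschitzOnWith {γ : ℝ → E} {s : Set ℝ} (h : HasUnitSpeedOn γ s) :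
    LipschitzOnWith 1 γ s := by
  have key : ∀ p ∈ s, ∀ q ∈ s, p ≤ q → edist (γ p) (γ q) ≤ edist p q := by
    intro p hp q hq hpq
    calc edist (γ p) (γ q) ≤ eVariationOn γ (s ∩ Icc p q) :=
          eVariationOn.edist_le γ ⟨hp, le_rfl, hpq⟩ ⟨hq, hpq, le_rfl⟩
      _ = ENNReal.ofReal (q - p) := by simpa using h hp hq
      _ = edist p q := by
        rw [edist_comm, edist_dist, Real.dist_eq, abs_of_nonneg (sub_nonneg.2 hpq)]
  intro p hp q hq
  rw [ENNReal.coe_one, one_mul]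
  rcases le_total p q with hpq | hqp
  · exact key p hp q hq hpq
  · simpa only [edist_comm] using key q hq p hp hqp

end ArcLength

theorem exists_lipschitzWith_one_of_boundedVariationOn {E : Type*} [MetricSpace E]
    {g : ℝ → E} {a b : ℝ} (hab : a ≤ b)
    (hgc : ContinuousOn g (Icc a b)) (hg : BoundedVariationOn g (Icc a b)) :
    ∃ ξ : ℝ → E, LipschitzWith 1 ξ ∧ ξ 0 = g a ∧ ξ (eVariationOn g (Icc a b)).toReal = g b := by
  set ℓ := (eVariationOn g (Icc a b)).toReal
  have hℓ : 0 ≤ ℓ := ENNReal.toReal_nonneg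
  have ha : a ∈ Icc a b := left_mem_Icc.2 hab
  have hb : b ∈ Icc a b := right_mem_Icc.2 hab
  have hbv := hg.locallyBoundedVariationOn
  set γ := naturalParameterization g (Icc a b) a
  have hγ : LipschitzOnWith 1 γ (Icc 0 ℓ) := by
    rw [← variationOnFromTo_image_Icc hab hgc hg]
    exact (has_unit_speed_naturalParameterization g hbv ha).lipschitzOnWith
  have hγa : γ 0 = g a := by
    simpa [variationOnFromTo.self] using edist_naturalParameterization_eq_zero hbv ha ha
  have hγb : γ ℓ = g b := by
    simpa [variationOnFromTo.eq_of_le g _ hab] using edist_naturalParameterization_eq_zero hbv ha hb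
  refine ⟨IccExtend hℓ ((Icc 0 ℓ).domRestrict γ), ?_, ?_, ?_⟩
  · exact (one_mul (1 : NNReal)) ▸ hγ.to_restrict.comp (LipschitzWith.projIcc hℓ)
  · simpa using hγa
  · simpa using hγb

section IntrinsicDist

variable {X : Type*} [MetricSpace X]

theorem intrinsicEDist_le_eVariationOn {ξ : ℝ → X} {p q : ℝ} (hpq : p ≤ q)
    (hξ : ContinuousOn ξ (Icc p q)) :
    intrinsicEDist (ξ p) (ξ q) ≤ eVariationOn ξ (Icc p q) := by
  set φ : ℝ → ℝ := fun u => p + u * (q - p)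
  have hφ : MonotoneOn φ (Icc 0 1) := fun u _ v _ huv => by simp only [φ]; nlinarith
  have hmaps : MapsTo φ (Icc 0 1) (Icc p q) := fun u hu => by
    constructor <;> simp only [φ] <;> nlinarith [hu.1, hu.2]
  have hc : ContinuousOn (ξ ∘ φ) (Icc 0 1) := hξ.comp (by fun_prop) hmaps
  calc intrinsicEDist (ξ p) (ξ q) ≤ eVariationOn (ξ ∘ φ) (Icc 0 1) :=
        iInf_le_of_le (ξ ∘ φ) <| iInf_le_of_le hc <| iInf_le_of_le (by simp [φ]) <|
          iInf_le_of_le (by simp [φ]) le_rfl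
    _ ≤ eVariationOn ξ (Icc p q) := eVariationOn.comp_le_of_monotoneOn ξ φ hφ hmaps

theorem LipschitzWith.intrinsicDist_le {ξ : ℝ → X} (hξ : LipschitzWith 1 ξ) {p q : ℝ}
    (hpq : p ≤ q) : intrinsicDist (ξ p) (ξ q) ≤ q - p := by
  refine ENNReal.toReal_le_of_le_ofReal (sub_nonneg.2 hpq) ?_
  calc intrinsicEDist (ξ p) (ξ q) ≤ eVariationOn (ξ ∘ id) (Icc p q) :=
        intrinsicEDist_le_eVariationOn hpq hξ.continuous.continuousOn
    _ ≤ 1 * eVariationOn id (Icc p q) :=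
        (hξ.lipschitzOnWith (s := univ)).comp_eVariationOn_le (mapsTo_univ _ _)
    _ = ENNReal.ofReal (q - p) := by simp

theorem exists_lipschitzWith_one_of_intrinsicEDist_lt {x y : X} {r : ℝ}
    (h : intrinsicEDist x y < ENNReal.ofReal r) :
    ∃ (ξ : ℝ → X) (ℓ : ℝ), 0 ≤ ℓ ∧ ℓ < r ∧ LipschitzWith 1 ξ ∧ ξ 0 = x ∧ ξ ℓ = y := by
  simp only [intrinsicEDist, iInf_lt_iff] at h
  obtain ⟨g, hgc, rfl, rfl, hlt⟩ := h
  obtain ⟨ξ, hξ, hξ0, hξ1⟩ :=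
    exists_lipschitzWith_one_of_boundedVariationOn zero_le_one hgc (ne_top_of_lt hlt)
  exact ⟨ξ, _, ENNReal.toReal_nonneg, ENNReal.toReal_lt_of_lt_ofReal hlt, hξ, hξ0, hξ1⟩

end IntrinsicDist

section ExitTime

variable {X : Type*} [MetricSpace X] {Ω : Set X} {ξ : ℝ → X} {t : ℝ}

theorem exitTime_le (ht : 0 ≤ t) (hξt : ξ t ∉ Ω) : exitTime Ω ξ ≤ t :=
  csInf_le ⟨0, fun _ hs => hs.1⟩ ⟨ht, hξt⟩

theorem mem_of_lt_exitTime (ht : 0 ≤ t) (htT : t < exitTime Ω ξ) : ξ t ∈ Ω :=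
  by_contra fun h => (exitTime_le ht h).not_gt htT

theorem exitTime_mem (hΩ : IsOpen Ω) (hξ : Continuous ξ) (ht : 0 ≤ t) (hξt : ξ t ∉ Ω) :
    0 ≤ exitTime Ω ξ ∧ ξ (exitTime Ω ξ) ∉ Ω :=
  (isClosed_Ici.inter (hΩ.isClosed_compl.preimage hξ)).csInf_mem ⟨t, ht, hξt⟩
    ⟨0, fun _ hs => hs.1⟩

theorem apply_exitTime_mem_frontier (hΩ : IsOpen Ω) (hξ : Continuous ξ) (h0 : ξ 0 ∈ Ω)
    (ht : 0 ≤ t) (hξt : ξ t ∉ Ω) : ξ (exitTime Ω ξ) ∈ frontier Ω := by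
  obtain ⟨hT0, hT⟩ := exitTime_mem hΩ hξ ht hξt
  have hTpos : 0 < exitTime Ω ξ := hT0.lt_of_ne fun h => hT (h ▸ h0)
  rw [hΩ.frontier_eq]
  have hlim : Tendsto ξ (𝓝[<] exitTime Ω ξ) (𝓝 (ξ (exitTime Ω ξ))) :=
    (hξ.tendsto _).mono_left nhdsWithin_le_nhds
  refine ⟨mem_closure_of_tendsto hlim ?_, hT⟩
  filter_upwards [Ioo_mem_nhdsLT hTpos] with s hs
  exact mem_of_lt_exitTime hs.1.le hs.2

end ExitTime

theorem uControl_sub_le_of_lipschitzWith_one {X : Type*} [MetricSpace X] {Ω : Set X}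
    (hΩ : IsOpen Ω) {f ζ : X → ℝ} {C L : ℝ} (hf0 : ∀ x ∈ closure Ω, 0 ≤ f x)
    (hfC : ∀ x ∈ closure Ω, f x ≤ C) (hL : 0 ≤ L)
    (hζ : ∀ y₁ ∈ frontier Ω, ∀ y₂ ∈ frontier Ω, |ζ y₁ - ζ y₂| ≤ L * intrinsicDist y₁ y₂)
    {x y : X} (hx : x ∈ Ω) (hy : y ∈ frontier Ω) (hbdd : BddBelow (controlSet Ω f ζ x))
    {ξ : ℝ → X} {ℓ : ℝ} (hℓ : 0 ≤ ℓ) (hξ : LipschitzWith 1 ξ) (hξ0 : ξ 0 = x)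
    (hξℓ : ξ ℓ = y) :
    uControl Ω f ζ x - ζ y ≤ ℓ * max L C := by
  have hyΩ : ξ ℓ ∉ Ω := by
    rw [hξℓ]
    exact (hΩ.frontier_eq ▸ hy).2
  set T := exitTime Ω ξ
  have hT0 : 0 ≤ T := (exitTime_mem hΩ hξ.continuous hℓ hyΩ).1
  have hTℓ : T ≤ ℓ := exitTime_le hℓ hyΩ
  have hξT : ξ T ∈ frontier Ω :=
    apply_exitTime_mem_frontier hΩ hξ.continuous (hξ0 ▸ hx) hℓ hyΩ
  have hu : uControl Ω f ζ x ≤ (∫ s in (0 : ℝ)..T, f (ξ s)) + ζ (ξ T) :=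
    csInf_le hbdd ⟨ξ, ⟨hξ, hξ0, ℓ, hℓ, hyΩ⟩, rfl⟩
  have hfξ : ∀ s ∈ uIoc 0 T, ‖f (ξ s)‖ ≤ C := by
    intro s hs
    rw [uIoc_of_le hT0] at hs
    have hξs : ξ s ∈ closure Ω := by
      rcases hs.2.lt_or_eq with hsT | rfl
      · exact subset_closure (mem_of_lt_exitTime hs.1.le hsT)
      · exact frontier_subset_closure hξT
    rw [Real.norm_of_nonneg (hf0 _ hξs)]
    exact hfC _ hξs
  have hint : (∫ s in (0 : ℝ)..T, f (ξ s)) ≤ C * T := by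
    simpa [abs_of_nonneg hT0] using
      (le_abs_self _).trans (intervalIntegral.norm_integral_le_of_norm_le_const hfξ)
  have hζT : ζ (ξ T) - ζ y ≤ L * (ℓ - T) :=
    calc ζ (ξ T) - ζ y ≤ L * intrinsicDist (ξ T) (ξ ℓ) :=
          (le_abs_self _).trans (hξℓ ▸ hζ _ hξT _ (hξℓ ▸ hy))
      _ ≤ L * (ℓ - T) := mul_le_mul_of_nonneg_left (hξ.intrinsicDist_le hTℓ) hL
  have hCM : C * T ≤ max L C * T := mul_le_mul_of_nonneg_right (le_max_right _ _) hT0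
  have hLM : L * (ℓ - T) ≤ max L C * (ℓ - T) :=
    mul_le_mul_of_nonneg_right (le_max_left _ _) (sub_nonneg.2 hTℓ)
  linarith

theorem boundary_consistency_general {X : Type*} [MetricSpace X]
    (hrect : ∀ x y : X, intrinsicEDist x y < ⊤)
    (Ω : Set X) (hΩ : IsOpen Ω)
    (f : X → ℝ)
    (hf0 : ∀ x ∈ closure Ω, 0 ≤ f x)
    (C : ℝ) (hfC : ∀ x ∈ closure Ω, f x ≤ C)
    (ζ : X → ℝ) (L : ℝ) (hL : 0 ≤ L)
    (hζ : ∀ y₁ ∈ frontier Ω, ∀ y₂ ∈ frontier Ω,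
      |ζ y₁ - ζ y₂| ≤ L * intrinsicDist y₁ y₂)
    (hbdd : ∀ x ∈ Ω, BddBelow (controlSet Ω f ζ x)) :
    ∀ x ∈ Ω, ∀ y ∈ frontier Ω,
      uControl Ω f ζ x - ζ y ≤ intrinsicDist x y * max L C := by
  intro x hx y hy
  have key : ∀ r > intrinsicDist x y, uControl Ω f ζ x - ζ y ≤ r * max L C := by
    intro r hr
    obtain ⟨ξ, ℓ, hℓ0, hℓr, hξ, hξ0, hξℓ⟩ := exists_lipschitzWith_one_of_intrinsicEDist_lt
      ((ENNReal.lt_ofReal_iff_toReal_lt (hrect x y).ne).2 hr)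
    calc uControl Ω f ζ x - ζ y ≤ ℓ * max L C :=
          uControl_sub_le_of_lipschitzWith_one hΩ hf0 hfC hL hζ hx hy (hbdd x hx) hℓ0 hξ hξ0 hξℓ
      _ ≤ r * max L C := mul_le_mul_of_nonneg_right hℓr.le (hL.trans (le_max_left _ _))
  have hlim : Tendsto (fun r => r * max L C) (𝓝[>] (intrinsicDist x y))
      (𝓝 (intrinsicDist x y * max L C)) :=
    ((continuous_mul_const _).tendsto _).mono_left nhdsWithin_le_nhds
  exact ge_of_tendsto hlim (eventually_nhdsWithin_of_forall key)

/-- boundary consistency estimate. If `f` is continuous, bounded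
and nonnegative on `cl Ω` and `ζ` is `L`-Lipschitz on `∂Ω` with respect to the
intrinsic metric `d̃`, then the value function `u` of the control problem
satisfies `u(x) − ζ(y) ≤ d̃(x,y)·max{L, sup_{cl Ω} f}`. -/
theorem boundary_consistency {X : Type*} [MetricSpace X] [CompleteSpace X]
    (hrect : ∀ x y : X, intrinsicEDist x y < ⊤)
    (hcons : ∀ ε > (0 : ℝ), ∃ δ > (0 : ℝ), ∀ x y : X,
      dist x y < δ → intrinsicDist x y < ε)
    (Ω : Set X) (hΩ : IsOpen Ω) (hΩne : Ω ≠ Set.univ)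
    (f : X → ℝ) (hf : ContinuousOn f (closure Ω))
    (hf0 : ∀ x ∈ closure Ω, 0 ≤ f x)
    (C : ℝ) (hfC : ∀ x ∈ closure Ω, f x ≤ C)
    (ζ : X → ℝ) (L : ℝ) (hL : 0 ≤ L)
    (hζ : ∀ y₁ ∈ frontier Ω, ∀ y₂ ∈ frontier Ω,
      |ζ y₁ - ζ y₂| ≤ L * intrinsicDist y₁ y₂)
    (hbdd : ∀ x ∈ Ω, BddBelow (controlSet Ω f ζ x)) :
    ∀ x ∈ Ω, ∀ y ∈ frontier Ω,
      uControl Ω f ζ x - ζ y ≤ intrinsicDist x y * max L C :=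
  boundary_consistency_general hrect Ω hΩ f hf0 C hfC ζ L hL hζ hbdd
end
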